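/- Let ρ : H(W) → GL(V) be a group homomorphism, where V is a nonzero finite-dimensional complex vector space, and assume the center acts by a nontrivial character: there is a nontrivial additive character ψ : (𝔽_q, +) → ℂˣ with ρ(0, z) = ψ(z)·id_V for all z ∈ 𝔽_q. If v ∈ V is a nonzero vector with ρ(w₁, 0)v = v for all w₁ ∈ W₁, then Σ_{w₂ ∈ W₂} ρ(w₂, 0)v ≠ 0. -/
import Mathlib


/-! The Heisenberg group `H(W) = W × 𝔽_q` attached to a symplectic space `(W, ω)` over a
finite field `𝔽_q` of odd characteristic, with multiplication
`(w, z) * (w', z') = (w + w', z + z' + 2⁻¹ ω(w, w'))`. -/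

/-- The underlying set `W × F` of the Heisenberg group attached to the form `ω`. -/
structure Heisenberg {F W : Type*} [Field F] [AddCommGroup W] [Module F W]
    (ω : W →ₗ[F] W →ₗ[F] F) where
  /-- vector component -/
  w : W
  /-- central component -/
  z : F

namespace Heisenberg

variable {F W : Type*} [Field F] [AddCommGroup W] [Module F W]
variable {ω : W →ₗ[F] W →ₗ[F] F}

instance : Mul (Heisenberg ω) :=
  ⟨fun a b => ⟨a.w + b.w, a.z + b.z + (2 : F)⁻¹ * ω a.w b.w⟩⟩

instance : One (Heisenberg ω) := ⟨⟨0, 0⟩⟩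

instance : Inv (Heisenberg ω) :=
  ⟨fun a => ⟨-a.w, -a.z + (2 : F)⁻¹ * ω a.w a.w⟩⟩

@[simp] theorem mul_w (a b : Heisenberg ω) : (a * b).w = a.w + b.w := rfl
@[simp] theorem mul_z (a b : Heisenberg ω) :
    (a * b).z = a.z + b.z + (2 : F)⁻¹ * ω a.w b.w := rfl
@[simp] theorem one_w : (1 : Heisenberg ω).w = 0 := rfl
@[simp] theorem one_z : (1 : Heisenberg ω).z = 0 := rfl
@[simp] theorem inv_w (a : Heisenberg ω) : (a⁻¹).w = -a.w := rfl
@[simp] theorem inv_z (a : Heisenberg ω) :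
    (a⁻¹).z = -a.z + (2 : F)⁻¹ * ω a.w a.w := rfl

protected theorem ext' {a b : Heisenberg ω} (h1 : a.w = b.w) (h2 : a.z = b.z) : a = b := by
  cases a; cases b; simp_all

instance : Group (Heisenberg ω) where
  mul_assoc a b c := by
    refine Heisenberg.ext' ?_ ?_
    · simp [add_assoc]
    · simp only [mul_w, mul_z, map_add, LinearMap.add_apply]
      ring
  one_mul a := by
    refine Heisenberg.ext' ?_ ?_
    · simp
    · simp
  mul_one a := by
    refine Heisenberg.ext' ?_ ?_
    · simp
    · simp
  inv_mul_cancel a := by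
    refine Heisenberg.ext' ?_ ?_
    · simp
    · simp only [mul_w, mul_z, inv_w, inv_z, one_z, map_neg, LinearMap.neg_apply]
      ring

end Heisenberg

/-- Let `W` be a finite-dimensional symplectic space over a finite field `F`
of odd characteristic with complete polarization `W = W₁ ⊕ W₂`, and let
`ρ : H(W) → GL(V)` be a homomorphism on a nonzero finite-dimensional complex vector space
whose center acts through a nontrivial additive character `ψ`.  If `v ≠ 0` is fixed by `W₁`,
then `∑_{w₂ ∈ W₂} ρ(w₂, 0) v ≠ 0`. -/
theorem heisenberg_sum_ne_zero {F : Type*} [Field F] [Fintype F] (h2 : (2 : F) ≠ 0)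
    {W : Type*} [AddCommGroup W] [Module F W] [FiniteDimensional F W]
    (ω : W →ₗ[F] W →ₗ[F] F)
    (halt : ∀ w : W, ω w w = 0)
    (hnondeg : ∀ w : W, (∀ w' : W, ω w w' = 0) → w = 0)
    (W₁ W₂ : Submodule F W)
    (hiso₁ : ∀ x ∈ W₁, ∀ y ∈ W₁, ω x y = 0)
    (hiso₂ : ∀ x ∈ W₂, ∀ y ∈ W₂, ω x y = 0)
    (hcompl : IsCompl W₁ W₂)
    {V : Type*} [AddCommGroup V] [Module ℂ V] [FiniteDimensional ℂ V] [Nontrivial V]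
    (ρ : Heisenberg ω →* LinearMap.GeneralLinearGroup ℂ V)
    (ψ : F → ℂˣ) (hψadd : ∀ a b : F, ψ (a + b) = ψ a * ψ b) (hψne : ∃ z : F, ψ z ≠ 1)
    (hcent : ∀ (z : F) (u : V), (ρ ⟨0, z⟩ : V →ₗ[ℂ] V) u = (ψ z : ℂ) • u)
    (v : V) (hv : v ≠ 0)
    (hfix : ∀ w₁ ∈ W₁, (ρ ⟨w₁, 0⟩ : V →ₗ[ℂ] V) v = v) :
    (∑ᶠ w₂ ∈ (W₂ : Set W), (ρ ⟨w₂, 0⟩ : V →ₗ[ℂ] V) v) ≠ 0 := by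

  classical
  have hfinW : Finite W := Module.finite_of_finite F
  letI : Fintype W := Fintype.ofFinite W
  -- ψ is a homomorphism, so ψ 0 = 1
  have hψ0 : ψ 0 = 1 := by
    have h := hψadd 0 0
    rw [add_zero] at h
    have := mul_left_cancel (a := ψ 0) (b := (1 : ℂˣ)) (c := ψ 0) (by rw [mul_one, ← h])
    exact this.symm
  -- antisymmetry of ω
  have hanti : ∀ x y : W, ω y x = - ω x y := by
    intro x y
    have h := halt (x + y)
    simp only [map_add, LinearMap.add_apply, halt] at h
    linear_combination h
  -- key commutation relation
  have hkey : ∀ x ∈ W₁, ∀ y : W,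
      (ρ ⟨x, 0⟩ : V →ₗ[ℂ] V) ((ρ ⟨y, 0⟩ : V →ₗ[ℂ] V) v)
        = (ψ (ω x y) : ℂ) • (ρ ⟨y, 0⟩ : V →ₗ[ℂ] V) v := by
    intro x hx y
    have hg : (⟨x, 0⟩ : Heisenberg ω) * ⟨y, 0⟩
        = (⟨0, ω x y⟩ : Heisenberg ω) * (⟨y, 0⟩ * ⟨x, 0⟩) := by
      refine Heisenberg.ext' ?_ ?_
      · simp [add_comm]
      · simp only [Heisenberg.mul_w, Heisenberg.mul_z, map_zero, LinearMap.zero_apply,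
          map_add, LinearMap.add_apply]
        rw [hanti x y]
        field_simp
        ring
    have happ : ∀ (a b : Heisenberg ω) (u : V),
        (ρ (a * b) : V →ₗ[ℂ] V) u = (ρ a : V →ₗ[ℂ] V) ((ρ b : V →ₗ[ℂ] V) u) := by
      intro a b u
      rw [map_mul]
      rfl
    have h1 := happ ⟨x, 0⟩ ⟨y, 0⟩ v
    rw [hg, happ, happ, hfix x hx, hcent] at h1
    exact h1.symm
  -- finiteness setup
  set f : W → V := fun y => (ρ ⟨y, 0⟩ : V →ₗ[ℂ] V) v with hf
  set s₂ : Finset W := (W₂ : Set W).toFinset with hs₂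
  have hrw : (∑ᶠ w₂ ∈ (W₂ : Set W), (ρ ⟨w₂, 0⟩ : V →ₗ[ℂ] V) v) = ∑ y ∈ s₂, f y := by
    have h := finsum_mem_coe_finset (s := s₂) f
    rwa [hs₂, Set.coe_toFinset] at h
  rw [hrw]
  intro hS
  -- the character sum
  set c : W → ℂ := fun y => ∑ x : W₁, ((ψ (ω x y) : ℂ)) with hc
  have hcvanish : ∀ y ∈ W₂, y ≠ 0 → c y = 0 := by
    intro y hy hy0
    -- there exists x₀ ∈ W₁ with ω x₀ y ≠ 0
    have hx₀ : ∃ x₀ : W₁, ω x₀ y ≠ 0 := by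
      by_contra hcon
      push_neg at hcon
      apply hy0
      apply hnondeg
      intro w'
      have hw' : w' ∈ W₁ ⊔ W₂ := by
        rw [hcompl.sup_eq_top]; trivial
      obtain ⟨a, ha, b, hb, rfl⟩ := Submodule.mem_sup.mp hw'
      have h1 : ω a y = 0 := hcon ⟨a, ha⟩
      have h2 : ω b y = 0 := hiso₂ b hb y hy
      have : ω (a + b) y = 0 := by
        simp [map_add, h1, h2]
      rw [hanti (a + b) y, this, neg_zero]
    obtain ⟨x₀, hx₀ne⟩ := hx₀
    obtain ⟨z, hzne⟩ := hψne
    -- element of W₁ mapping to z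
    set t : F := z / ω x₀ y with ht
    set x' : W₁ := t • x₀ with hx'
    have hx'val : ω x' y = z := by
      have : ((x' : W) : W) = t • (x₀ : W) := rfl
      rw [hx']
      simp only [Submodule.coe_smul, map_smul, LinearMap.smul_apply, smul_eq_mul]
      rw [ht, div_mul_cancel₀ _ hx₀ne]
    -- shift trick
    have hshift : c y = (ψ z : ℂ) * c y := by
      show (∑ x : W₁, ((ψ (ω x y) : ℂ))) = (ψ z : ℂ) * ∑ x : W₁, ((ψ (ω x y) : ℂ))
      nth_rewrite 1 [← Equiv.sum_comp (Equiv.addLeft x') (fun x : W₁ => ((ψ (ω x y) : ℂ)))]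
      rw [Finset.mul_sum]
      apply Finset.sum_congr rfl
      intro x _
      have : ω ((x' + x : W₁) : W) y = z + ω x y := by
        push_cast
        rw [map_add, LinearMap.add_apply, hx'val]
      simp only [Equiv.coe_addLeft]
      rw [this, hψadd]
      push_cast
      ring
    have : ((ψ z : ℂ) - 1) * c y = 0 := by
      rw [sub_mul, one_mul, ← hshift, sub_self]
    rcases mul_eq_zero.mp this with h | h
    · exfalso
      apply hzne
      have : (ψ z : ℂ) = 1 := by linear_combination h
      ext
      exact this
    · exact h
  -- apply the averaging operator to S = 0
  have hdouble : (0 : V) = ∑ y ∈ s₂, c y • f y := by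
    have h0 : (0 : V) = ∑ x : W₁, (ρ ⟨(x : W), 0⟩ : V →ₗ[ℂ] V) (∑ y ∈ s₂, f y) := by
      rw [hS]
      simp
    rw [h0]
    have : ∀ x : W₁, (ρ ⟨(x : W), 0⟩ : V →ₗ[ℂ] V) (∑ y ∈ s₂, f y)
        = ∑ y ∈ s₂, (ψ (ω x y) : ℂ) • f y := by
      intro x
      rw [map_sum]
      exact Finset.sum_congr rfl fun y _ => hkey x x.2 y
    rw [Finset.sum_congr rfl fun x _ => this x, Finset.sum_comm]
    apply Finset.sum_congr rfl
    intro y _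
    show _ = c y • f y
    rw [show c y = ∑ x : W₁, ((ψ (ω x y) : ℂ)) from rfl, Finset.sum_smul]
  -- evaluate: only y = 0 survives
  have h0mem : (0 : W) ∈ s₂ := by
    rw [hs₂, Set.mem_toFinset]
    exact W₂.zero_mem
  have hsingle : ∑ y ∈ s₂, c y • f y = c 0 • f 0 := by
    apply Finset.sum_eq_single_of_mem 0 h0mem
    intro y hy hyne
    rw [hcvanish y (by rw [hs₂, Set.mem_toFinset] at hy; exact hy) hyne, zero_smul]
  have hc0 : c 0 = (Fintype.card W₁ : ℂ) := by
    show (∑ x : W₁, ((ψ (ω x 0) : ℂ))) = _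
    simp only [map_zero, hψ0, Units.val_one]
    rw [Finset.sum_const, Finset.card_univ]
    simp
  have hf0 : f 0 = v := by
    show (ρ (1 : Heisenberg ω) : V →ₗ[ℂ] V) v = v
    rw [map_one]
    rfl
  rw [hsingle, hc0, hf0] at hdouble
  have hcard : (Fintype.card W₁ : ℂ) ≠ 0 := by
    exact_mod_cast Fintype.card_ne_zero
  exact hv (by
    have := hdouble.symm
    rwa [smul_eq_zero_iff_right hcard] at this)
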